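/- arXiv:1608.04833 — 4 statements merged into one kernel-verified Lean document; each statement's English description precedes it below -/
import Mathlib

section
/- Let d be a natural number, let M and K be skew-symmetric real d×d matrices, let S : ℝ^d → ℝ be continuously differentiable, and let z : ℝ × ℝ → ℝ^d be twice continuously differentiable and satisfy the multi-symplectic equation M z_t + K z_x = ∇S(z) on an open set U ⊆ ℝ × ℝ (subscripts t and x denote partial derivatives in the first and second argument respectively). Define the density functions E(x,t) = S(z(x,t)) + (1/2)⟨z_x(x,t), K z(x,t)⟩ and F(x,t) = −(1/2)⟨z_t(x,t), K z(x,t)⟩. Then the local energy conservation law ∂_t E + ∂_x F = 0 holds at every point of U. -/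
/-
Differentiating `E` in `t` and `F` in `x`, the two terms containing the mixed second derivative
`z_tx` cancel by the symmetry of second derivatives, leaving
`⟨∇S(z), z_t⟩ + ½ (⟨z_x, K z_t⟩ - ⟨z_t, K z_x⟩)`. Substituting `∇S(z) = M z_t + K z_x`,
the term `⟨M z_t, z_t⟩` vanishes since `M` is skew, and skew-symmetry of `K` turns the
remainder into `⟨K z_x, z_t⟩ - ⟨z_t, K z_x⟩ = 0`.
-/

open Matrix

/-- Partial derivative with respect to the first argument (time). -/
noncomputable def pt {E : Type*} [NormedAddCommGroup E] [NormedSpace ℝ E]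
    (z : ℝ × ℝ → E) (p : ℝ × ℝ) : E :=
  deriv (fun s => z (s, p.2)) p.1

/-- Partial derivative with respect to the second argument (space). -/
noncomputable def px {E : Type*} [NormedAddCommGroup E] [NormedSpace ℝ E]
    (z : ℝ × ℝ → E) (p : ℝ × ℝ) : E :=
  deriv (fun s => z (p.1, s)) p.2

open scoped RealInnerProductSpace Topology

theorem inner_toEuclideanLin_of_transpose_eq_neg {n : Type*} [Fintype n] [DecidableEq n]
    {A : Matrix n n ℝ} (hA : Aᵀ = -A) (u v : EuclideanSpace ℝ n) :
    ⟪toEuclideanLin A u, v⟫ = -⟪u, toEuclideanLin A v⟫ := by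
  rw [← LinearMap.adjoint_inner_right, ← toEuclideanLin_conjTranspose_eq_adjoint,
    conjTranspose_eq_transpose_of_trivial, hA, map_neg, LinearMap.neg_apply, inner_neg_right]

theorem inner_toEuclideanLin_self_of_transpose_eq_neg {n : Type*} [Fintype n] [DecidableEq n]
    {A : Matrix n n ℝ} (hA : Aᵀ = -A) (u : EuclideanSpace ℝ n) :
    ⟪toEuclideanLin A u, u⟫ = 0 := by
  have h := inner_toEuclideanLin_of_transpose_eq_neg hA u u
  linarith [real_inner_comm u (toEuclideanLin A u)]

section Slices
variable {E : Type*} [NormedAddCommGroup E] [NormedSpace ℝ E] {f : ℝ × ℝ → E}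
  {f' : ℝ × ℝ →L[ℝ] E} {p : ℝ × ℝ}

theorem HasFDerivAt.pt_eq (h : HasFDerivAt f f' p) : pt f p = f' (1, 0) :=
  (h.comp_hasDerivAt p.1 ((hasDerivAt_id p.1).prodMk (hasDerivAt_const p.1 p.2))).deriv

theorem HasFDerivAt.px_eq (h : HasFDerivAt f f' p) : px f p = f' (0, 1) :=
  (h.comp_hasDerivAt p.2 ((hasDerivAt_const p.2 p.1).prodMk (hasDerivAt_id p.2))).deriv
end Slices

theorem hasFDerivAt_inner_fderiv_apply {X F : Type*} [NormedAddCommGroup X] [NormedSpace ℝ X]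
    [NormedAddCommGroup F] [InnerProductSpace ℝ F] {z : X → F} {p : X}
    (hz : DifferentiableAt ℝ z p) (hDz : DifferentiableAt ℝ (fderiv ℝ z) p)
    (A : F →L[ℝ] F) (v : X) :
    HasFDerivAt (fun q => ⟪fderiv ℝ z q v, A (z q)⟫)
      ((innerSL ℝ (fderiv ℝ z p v)).comp (A.comp (fderiv ℝ z p))
        + (innerSL ℝ (A (z p))).comp ((fderiv ℝ (fderiv ℝ z) p).flip v)) p := by
  refine ((hDz.hasFDerivAt.clm_apply (hasFDerivAt_const v p)).inner ℝ
    (A.hasFDerivAt.comp p hz.hasFDerivAt)).congr_fderiv ?_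
  ext w
  simp [real_inner_comm]

theorem pt_energy_add_px_flux {F : Type*} [NormedAddCommGroup F] [InnerProductSpace ℝ F]
    [CompleteSpace F] (A : F →L[ℝ] F) {S : F → ℝ} {z : ℝ × ℝ → F} {p : ℝ × ℝ}
    (hS : DifferentiableAt ℝ S (z p)) (hz : ContDiffAt ℝ 2 z p) {e f : ℝ × ℝ → ℝ}
    (he : ∀ᶠ q in 𝓝 p, e q = S (z q) + 1 / 2 * ⟪px z q, A (z q)⟫)
    (hf : ∀ᶠ q in 𝓝 p, f q = -(1 / 2) * ⟪pt z q, A (z q)⟫) :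
    pt e p + px f p = ⟪gradient S (z p), pt z p⟫
      + 1 / 2 * (⟪px z p, A (pt z p)⟫ - ⟪pt z p, A (px z p)⟫) := by
  have hzp := (hz.differentiableAt two_ne_zero).hasFDerivAt
  have hz_near : ∀ᶠ q in 𝓝 p, DifferentiableAt ℝ z q :=
    (hz.eventually (by simp)).mono fun q hq => hq.differentiableAt two_ne_zero
  have hDz : DifferentiableAt ℝ (fderiv ℝ z) p :=
    (hz.fderiv_right one_add_one_eq_two.le).differentiableAt one_ne_zero
  have he_loc : e =ᶠ[𝓝 p] fun q => S (z q) + 1 / 2 * ⟪fderiv ℝ z q (0, 1), A (z q)⟫ := by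
    filter_upwards [he, hz_near] with q heq hq
    rw [heq, hq.hasFDerivAt.px_eq]
  have hf_loc : f =ᶠ[𝓝 p] fun q => -(1 / 2) * ⟪fderiv ℝ z q (1, 0), A (z q)⟫ := by
    filter_upwards [hf, hz_near] with q hfq hq
    rw [hfq, hq.hasFDerivAt.pt_eq]
  have hpt_e := ((hS.hasFDerivAt.comp p hzp).add
    ((hasFDerivAt_inner_fderiv_apply hzp.differentiableAt hDz A (0, 1)).const_mul (1 / 2))
    |>.congr_of_eventuallyEq he_loc).pt_eq
  have hpx_f := ((hasFDerivAt_inner_fderiv_apply hzp.differentiableAt hDz A (1, 0)).const_mul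
    (-(1 / 2)) |>.congr_of_eventuallyEq hf_loc).px_eq
  have hsymm : fderiv ℝ (fderiv ℝ z) p (1, 0) (0, 1) = fderiv ℝ (fderiv ℝ z) p (0, 1) (1, 0) :=
    (hz.isSymmSndFDerivAt (by simp)).eq _ _
  rw [hpt_e, hpx_f, hzp.pt_eq, hzp.px_eq, inner_gradient_left]
  simp only [_root_.add_apply, ContinuousLinearMap.comp_apply, _root_.smul_apply,
    ContinuousLinearMap.flip_apply, coe_innerSL_apply, smul_eq_mul, hsymm]
  ring

/-- Local energy conservation law for a multi-symplectic PDE `M z_t + K z_x = ∇S(z)`: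
`∂_t E + ∂_x F = 0` on `U`, with `E = S(z) + ½⟨z_x, K z⟩` and `F = −½⟨z_t, K z⟩`. -/
theorem stmt_0 (d : ℕ) (M K : Matrix (Fin d) (Fin d) ℝ)
    (hM : Mᵀ = -M) (hK : Kᵀ = -K)
    (S : EuclideanSpace ℝ (Fin d) → ℝ) (hS : ContDiff ℝ 1 S)
    (U : Set (ℝ × ℝ)) (hU : IsOpen U)
    (z : ℝ × ℝ → EuclideanSpace ℝ (Fin d)) (hz : ContDiffOn ℝ 2 z U)
    (heq : ∀ p ∈ U,
      Matrix.toEuclideanLin M (pt z p) + Matrix.toEuclideanLin K (px z p)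
        = gradient S (z p))
    (E F : ℝ × ℝ → ℝ)
    (hE : ∀ p, E p = S (z p)
      + (1 / 2) * (inner ℝ (px z p) (Matrix.toEuclideanLin K (z p)) : ℝ))
    (hF : ∀ p, F p = -(1 / 2) * (inner ℝ (pt z p) (Matrix.toEuclideanLin K (z p)) : ℝ)) :
    ∀ p ∈ U, pt E p + px F p = 0 := by
  intro p hp
  rw [pt_energy_add_px_flux (toEuclideanLin K).toContinuousLinearMap
    (hS.differentiable one_ne_zero _) (hz.contDiffAt (hU.mem_nhds hp))
    (.of_forall hE) (.of_forall hF), ← heq p hp]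
  simp only [LinearMap.coe_toContinuousLinearMap', inner_add_left,
    inner_toEuclideanLin_self_of_transpose_eq_neg hM]
  linarith [inner_toEuclideanLin_of_transpose_eq_neg hK (px z p) (pt z p),
    real_inner_comm (pt z p) (toEuclideanLin K (px z p))]
end

section
/- Let d be a natural number, let M and K be skew-symmetric real d×d matrices, let S : ℝ^d → ℝ be continuously differentiable, and let z : ℝ × ℝ → ℝ^d be twice continuously differentiable and satisfy the multi-symplectic equation M z_t + K z_x = ∇S(z) on an open set U ⊆ ℝ × ℝ. Define the density functions I(x,t) = −(1/2)⟨z_x(x,t), M z(x,t)⟩ and G(x,t) = S(z(x,t)) + (1/2)⟨z_t(x,t), M z(x,t)⟩. Then the local momentum conservation law ∂_t I + ∂_x G = 0 holds at every point of U. -/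
open Matrix

/-!
Differentiate `I` in `t` and `G` in `x`. The second-order terms `∓½⟨z_xt, M z⟩` cancel by the
symmetry of mixed partials. Substituting `∇S(z) = M z_t + K z_x`, the remaining terms are
`⟨K z_x, z_x⟩`, which vanishes, and `⟨M z_t, z_x⟩ - ½⟨z_x, M z_t⟩ + ½⟨z_t, M z_x⟩`, which vanishes
because `⟨u, M v⟩ = -⟨M u, v⟩` for skew-symmetric `M`.
-/

open scoped RealInnerProductSpace

theorem Matrix.inner_toEuclideanCLM_left_of_transpose_eq_neg {n : Type*} [Fintype n]
    [DecidableEq n] {N : Matrix n n ℝ} (hN : Nᵀ = -N) (u v : EuclideanSpace ℝ n) :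
    ⟪toEuclideanCLM (𝕜 := ℝ) N u, v⟫ = -⟪u, toEuclideanCLM (𝕜 := ℝ) N v⟫ := by
  rw [real_inner_comm, inner_toEuclideanCLM, inner_toEuclideanCLM, dotProduct_mulVec,
    ← mulVec_transpose, hN, neg_mulVec, neg_dotProduct, dotProduct_comm]

section PartialDerivatives

variable {E : Type*} [NormedAddCommGroup E] [NormedSpace ℝ E] {z : ℝ × ℝ → E} {p : ℝ × ℝ}

theorem HasFDerivAt.hasDerivAt_fst_line {z' : ℝ × ℝ →L[ℝ] E} (h : HasFDerivAt z z' p) :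
    HasDerivAt (fun s => z (s, p.2)) (z' (1, 0)) p.1 :=
  h.comp_hasDerivAt_of_eq p.1 ((hasDerivAt_id p.1).prodMk (hasDerivAt_const p.1 p.2)) rfl

theorem HasFDerivAt.hasDerivAt_snd_line {z' : ℝ × ℝ →L[ℝ] E} (h : HasFDerivAt z z' p) :
    HasDerivAt (fun s => z (p.1, s)) (z' (0, 1)) p.2 :=
  h.comp_hasDerivAt_of_eq p.2 ((hasDerivAt_const p.2 p.1).prodMk (hasDerivAt_id p.2)) rfl

theorem pt_eq_fderiv (h : DifferentiableAt ℝ z p) : pt z p = fderiv ℝ z p (1, 0) :=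
  h.hasFDerivAt.hasDerivAt_fst_line.deriv

theorem px_eq_fderiv (h : DifferentiableAt ℝ z p) : px z p = fderiv ℝ z p (0, 1) :=
  h.hasFDerivAt.hasDerivAt_snd_line.deriv

theorem HasFDerivAt.hasDerivAt_pt {z' : ℝ × ℝ →L[ℝ] E} (h : HasFDerivAt z z' p) :
    HasDerivAt (fun s => z (s, p.2)) (pt z p) p.1 := by
  rw [pt_eq_fderiv h.differentiableAt, h.fderiv]
  exact h.hasDerivAt_fst_line

theorem HasFDerivAt.hasDerivAt_px {z' : ℝ × ℝ →L[ℝ] E} (h : HasFDerivAt z z' p) :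
    HasDerivAt (fun s => z (p.1, s)) (px z p) p.2 := by
  rw [px_eq_fderiv h.differentiableAt, h.fderiv]
  exact h.hasDerivAt_snd_line

theorem ContDiffAt.hasFDerivAt_fderiv_apply (hz : ContDiffAt ℝ 2 z p) (v : ℝ × ℝ) :
    HasFDerivAt (fun q => fderiv ℝ z q v) ((fderiv ℝ (fderiv ℝ z) p).flip v) p := by
  simpa using ((hz.fderiv_right one_add_one_eq_two.le).differentiableAt
    one_ne_zero).hasFDerivAt.clm_apply (hasFDerivAt_const v p)

theorem ContDiffAt.hasFDerivAt_pt (hz : ContDiffAt ℝ 2 z p) :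
    HasFDerivAt (pt z) ((fderiv ℝ (fderiv ℝ z) p).flip (1, 0)) p := by
  refine (hz.hasFDerivAt_fderiv_apply (1, 0)).congr_of_eventuallyEq ?_
  filter_upwards [hz.eventually (by simp)] with q hq
  exact pt_eq_fderiv (hq.differentiableAt two_ne_zero)

theorem ContDiffAt.hasFDerivAt_px (hz : ContDiffAt ℝ 2 z p) :
    HasFDerivAt (px z) ((fderiv ℝ (fderiv ℝ z) p).flip (0, 1)) p := by
  refine (hz.hasFDerivAt_fderiv_apply (0, 1)).congr_of_eventuallyEq ?_
  filter_upwards [hz.eventually (by simp)] with q hq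
  exact px_eq_fderiv (hq.differentiableAt two_ne_zero)

theorem ContDiffAt.hasDerivAt_px_fst_line (hz : ContDiffAt ℝ 2 z p) :
    HasDerivAt (fun s => px z (s, p.2)) (fderiv ℝ (fderiv ℝ z) p (1, 0) (0, 1)) p.1 :=
  hz.hasFDerivAt_px.hasDerivAt_fst_line

theorem ContDiffAt.hasDerivAt_pt_snd_line (hz : ContDiffAt ℝ 2 z p) :
    HasDerivAt (fun s => pt z (p.1, s)) (fderiv ℝ (fderiv ℝ z) p (1, 0) (0, 1)) p.2 := by
  rw [hz.isSymmSndFDerivAt (by simp [minSmoothness_of_isRCLikeNormedField])]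
  exact hz.hasFDerivAt_pt.hasDerivAt_snd_line

end PartialDerivatives

section MomentumConservation

variable {E : Type*} [NormedAddCommGroup E] [InnerProductSpace ℝ E]

noncomputable def momentumDensity (A : E →L[ℝ] E) (z : ℝ × ℝ → E) (q : ℝ × ℝ) : ℝ :=
  -(1 / 2) * ⟪px z q, A (z q)⟫

noncomputable def momentumFlux (A : E →L[ℝ] E) (S : E → ℝ) (z : ℝ × ℝ → E) (q : ℝ × ℝ) : ℝ :=
  S (z q) + (1 / 2) * ⟪pt z q, A (z q)⟫

variable {A B : E →L[ℝ] E} {S : E → ℝ} {z : ℝ × ℝ → E} {p : ℝ × ℝ}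

theorem hasDerivAt_momentumDensity_fst_line (hz : ContDiffAt ℝ 2 z p) :
    HasDerivAt (fun s => momentumDensity A z (s, p.2))
      (-(1 / 2) * (⟪px z p, A (pt z p)⟫ + ⟪fderiv ℝ (fderiv ℝ z) p (1, 0) (0, 1), A (z p)⟫))
      p.1 :=
  (hz.hasDerivAt_px_fst_line.inner ℝ
    (A.hasFDerivAt.comp_hasDerivAt _
      (hz.differentiableAt two_ne_zero).hasFDerivAt.hasDerivAt_pt)).const_mul _

theorem hasDerivAt_momentumFlux_snd_line [CompleteSpace E] {g : E} (hz : ContDiffAt ℝ 2 z p)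
    (hS : HasGradientAt S g (z p)) :
    HasDerivAt (fun s => momentumFlux A S z (p.1, s))
      (⟪g, px z p⟫ +
        (1 / 2) * (⟪pt z p, A (px z p)⟫ + ⟪fderiv ℝ (fderiv ℝ z) p (1, 0) (0, 1), A (z p)⟫))
      p.2 := by
  have hz' := (hz.differentiableAt two_ne_zero).hasFDerivAt.hasDerivAt_px
  have hSz := (hasGradientAt_iff_hasFDerivAt.mp hS).comp_hasDerivAt _ hz'
  simp only [InnerProductSpace.toDual_apply_apply] at hSz
  exact hSz.add
    ((hz.hasDerivAt_pt_snd_line.inner ℝ (A.hasFDerivAt.comp_hasDerivAt _ hz')).const_mul _)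

theorem pt_momentumDensity_add_px_momentumFlux [CompleteSpace E] (hA : ∀ u v, ⟪A u, v⟫ = -⟪u, A v⟫)
    (hB : ∀ u v, ⟪B u, v⟫ = -⟪u, B v⟫) (hz : ContDiffAt ℝ 2 z p)
    (hS : HasGradientAt S (A (pt z p) + B (px z p)) (z p)) :
    pt (momentumDensity A z) p + px (momentumFlux A S z) p = 0 := by
  rw [pt, px, (hasDerivAt_momentumDensity_fst_line hz).deriv,
    (hasDerivAt_momentumFlux_snd_line hz hS).deriv, inner_add_left]
  linarith [hA (pt z p) (px z p), hA (px z p) (pt z p), hB (px z p) (px z p),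
    real_inner_comm (A (px z p)) (pt z p), real_inner_comm (B (px z p)) (px z p)]

end MomentumConservation

/-- Local momentum conservation law for a multi-symplectic PDE `M z_t + K z_x = ∇S(z)`:
`∂_t I + ∂_x G = 0` on `U`, with `I = −½⟨z_x, M z⟩` and `G = S(z) + ½⟨z_t, M z⟩`. -/
theorem stmt_1 (d : ℕ) (M K : Matrix (Fin d) (Fin d) ℝ)
    (hM : Mᵀ = -M) (hK : Kᵀ = -K)
    (S : EuclideanSpace ℝ (Fin d) → ℝ) (hS : ContDiff ℝ 1 S)
    (U : Set (ℝ × ℝ)) (hU : IsOpen U)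
    (z : ℝ × ℝ → EuclideanSpace ℝ (Fin d)) (hz : ContDiffOn ℝ 2 z U)
    (heq : ∀ p ∈ U,
      Matrix.toEuclideanLin M (pt z p) + Matrix.toEuclideanLin K (px z p)
        = gradient S (z p))
    (I G : ℝ × ℝ → ℝ)
    (hI : ∀ p, I p = -(1 / 2) * (inner ℝ (px z p) (Matrix.toEuclideanLin M (z p)) : ℝ))
    (hG : ∀ p, G p = S (z p)
      + (1 / 2) * (inner ℝ (pt z p) (Matrix.toEuclideanLin M (z p)) : ℝ)) :
    ∀ p ∈ U, pt I p + px G p = 0 := by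
  intro p hp
  have hI' : I = momentumDensity (toEuclideanCLM (𝕜 := ℝ) M) z := funext hI
  have hG' : G = momentumFlux (toEuclideanCLM (𝕜 := ℝ) M) S z := funext hG
  have hS' : HasGradientAt S
      (toEuclideanCLM (𝕜 := ℝ) M (pt z p) + toEuclideanCLM (𝕜 := ℝ) K (px z p)) (z p) := by
    rw [show toEuclideanCLM (𝕜 := ℝ) M (pt z p) + toEuclideanCLM (𝕜 := ℝ) K (px z p)
      = gradient S (z p) from heq p hp]
    exact ((hS.differentiable one_ne_zero) (z p)).hasGradientAt
  rw [hI', hG']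
  exact pt_momentumDensity_add_px_momentumFlux
    (inner_toEuclideanCLM_left_of_transpose_eq_neg hM)
    (inner_toEuclideanCLM_left_of_transpose_eq_neg hK) (hz.contDiffAt (hU.mem_nhds hp)) hS'
end

section
/- Let u, φ, w, v, η : ℝ × ℝ → ℝ be smooth functions satisfying, at every point of an open set, the system: (i) −(1/2)η_t − v_x = −w − (1/2)η², (ii) w_x = 0, (iii) φ_x = u, (iv) u_x = η, (v) (1/2)u_t = −uη + v. Then u satisfies the Hunter–Saxton equation u_{xxt} + 2 u_x u_{xx} + u u_{xxx} = 0 at every point of that open set. -/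
/-- Partial derivative in the spatial (first) variable. -/
noncomputable def pdx (u : ℝ → ℝ → ℝ) : ℝ → ℝ → ℝ :=
  fun x t => deriv (fun y => u y t) x

/-- Partial derivative in the temporal (second) variable. -/
noncomputable def pdt (u : ℝ → ℝ → ℝ) : ℝ → ℝ → ℝ :=
  fun x t => deriv (fun s => u x s) t

open Function

private lemma slice_x {g : ℝ → ℝ → ℝ} (hg : ContDiff ℝ (⊤ : ℕ∞) (uncurry g)) (x t : ℝ) :
    HasDerivAt (fun y => g y t) (fderiv ℝ (uncurry g) (x, t) (1, 0)) x := by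
  have hG : HasFDerivAt (uncurry g) (fderiv ℝ (uncurry g) (x, t)) (x, t) :=
    (hg.differentiable (by simp) (x, t)).hasFDerivAt
  have hl : HasDerivAt (fun y : ℝ => (y, t)) ((1 : ℝ), (0 : ℝ)) x :=
    (hasDerivAt_id x).prodMk (hasDerivAt_const x t)
  exact hG.comp_hasDerivAt x hl

private lemma slice_t {g : ℝ → ℝ → ℝ} (hg : ContDiff ℝ (⊤ : ℕ∞) (uncurry g)) (x t : ℝ) :
    HasDerivAt (fun s => g x s) (fderiv ℝ (uncurry g) (x, t) (0, 1)) t := by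
  have hG : HasFDerivAt (uncurry g) (fderiv ℝ (uncurry g) (x, t)) (x, t) :=
    (hg.differentiable (by simp) (x, t)).hasFDerivAt
  have hl : HasDerivAt (fun s : ℝ => (x, s)) ((0 : ℝ), (1 : ℝ)) t :=
    (hasDerivAt_const t x).prodMk (hasDerivAt_id t)
  exact hG.comp_hasDerivAt t hl

private lemma pdx_eq_fderiv {g : ℝ → ℝ → ℝ} (hg : ContDiff ℝ (⊤ : ℕ∞) (uncurry g)) (x t : ℝ) :
    pdx g x t = fderiv ℝ (uncurry g) (x, t) (1, 0) :=
  (slice_x hg x t).deriv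

private lemma pdt_eq_fderiv {g : ℝ → ℝ → ℝ} (hg : ContDiff ℝ (⊤ : ℕ∞) (uncurry g)) (x t : ℝ) :
    pdt g x t = fderiv ℝ (uncurry g) (x, t) (0, 1) :=
  (slice_t hg x t).deriv

private lemma uncurry_pdx {g : ℝ → ℝ → ℝ} (hg : ContDiff ℝ (⊤ : ℕ∞) (uncurry g)) :
    uncurry (pdx g) = fun p : ℝ × ℝ => fderiv ℝ (uncurry g) p (1, 0) := by
  funext p
  obtain ⟨a, b⟩ := p
  exact pdx_eq_fderiv hg a b

private lemma uncurry_pdt {g : ℝ → ℝ → ℝ} (hg : ContDiff ℝ (⊤ : ℕ∞) (uncurry g)) :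
    uncurry (pdt g) = fun p : ℝ × ℝ => fderiv ℝ (uncurry g) p (0, 1) := by
  funext p
  obtain ⟨a, b⟩ := p
  exact pdt_eq_fderiv hg a b

private lemma contDiff_fderiv_apply {g : ℝ → ℝ → ℝ} (hg : ContDiff ℝ (⊤ : ℕ∞) (uncurry g))
    (e : ℝ × ℝ) : ContDiff ℝ (⊤ : ℕ∞) (fun p : ℝ × ℝ => fderiv ℝ (uncurry g) p e) := by
  have h1 : ContDiff ℝ (⊤ : ℕ∞) (fderiv ℝ (uncurry g)) := hg.fderiv_right (by simp)
  exact (ContinuousLinearMap.apply ℝ ℝ e).contDiff.comp h1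

private lemma contDiff_pdx {g : ℝ → ℝ → ℝ} (hg : ContDiff ℝ (⊤ : ℕ∞) (uncurry g)) :
    ContDiff ℝ (⊤ : ℕ∞) (uncurry (pdx g)) := by
  rw [uncurry_pdx hg]; exact contDiff_fderiv_apply hg _

private lemma contDiff_pdt {g : ℝ → ℝ → ℝ} (hg : ContDiff ℝ (⊤ : ℕ∞) (uncurry g)) :
    ContDiff ℝ (⊤ : ℕ∞) (uncurry (pdt g)) := by
  rw [uncurry_pdt hg]; exact contDiff_fderiv_apply hg _

/-- Clairaut's theorem for smooth functions of two real variables. -/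
private lemma clairaut {g : ℝ → ℝ → ℝ} (hg : ContDiff ℝ (⊤ : ℕ∞) (uncurry g)) (x t : ℝ) :
    pdt (pdx g) x t = pdx (pdt g) x t := by
  set G := uncurry g with hG
  have hdG : Differentiable ℝ G := hg.differentiable (by simp)
  have hfd : ContDiff ℝ (⊤ : ℕ∞) (fderiv ℝ G) := hg.fderiv_right (by simp)
  set f'' := fderiv ℝ (fderiv ℝ G) (x, t) with hf''
  have hsymm : ∀ p q : ℝ × ℝ, f'' p q = f'' q p :=
    second_derivative_symmetric (fun y => (hdG y).hasFDerivAt)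
      ((hfd.differentiable (by simp) (x, t)).hasFDerivAt)
  have hfd2 : HasFDerivAt (fderiv ℝ G) f'' (x, t) :=
    (hfd.differentiable (by simp) (x, t)).hasFDerivAt
  -- compute pdt (pdx g) x t
  have hApp : ∀ e : ℝ × ℝ,
      HasFDerivAt (fun p : ℝ × ℝ => fderiv ℝ G p e)
        ((ContinuousLinearMap.apply ℝ ℝ e).comp f'') (x, t) :=
    fun e => (ContinuousLinearMap.apply ℝ ℝ e).hasFDerivAt.comp (x, t) hfd2
  have h1 : pdt (pdx g) x t = f'' (0, 1) (1, 0) := by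
    have hl : HasDerivAt (fun s : ℝ => (x, s)) ((0 : ℝ), (1 : ℝ)) t :=
      (hasDerivAt_const t x).prodMk (hasDerivAt_id t)
    have := ((hApp (1, 0)).comp_hasDerivAt t hl)
    have heq : (fun s => pdx g x s) = fun s => fderiv ℝ G (x, s) (1, 0) := by
      funext s; exact pdx_eq_fderiv hg x s
    show deriv (fun s => pdx g x s) t = _
    rw [heq]
    exact this.deriv
  have h2 : pdx (pdt g) x t = f'' (1, 0) (0, 1) := by
    have hl : HasDerivAt (fun y : ℝ => (y, t)) ((1 : ℝ), (0 : ℝ)) x :=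
      (hasDerivAt_id x).prodMk (hasDerivAt_const x t)
    have := ((hApp (0, 1)).comp_hasDerivAt x hl)
    have heq : (fun y => pdt g y t) = fun y => fderiv ℝ G (y, t) (0, 1) := by
      funext y; exact pdt_eq_fderiv hg y t
    show deriv (fun y => pdt g y t) x = _
    rw [heq]
    exact this.deriv
  rw [h1, h2, hsymm]

private lemma pdx_congr_on {U : Set (ℝ × ℝ)} (hU : IsOpen U) {f g : ℝ → ℝ → ℝ}
    (h : ∀ x t, (x, t) ∈ U → f x t = g x t) {x t : ℝ} (hxt : (x, t) ∈ U) :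
    pdx f x t = pdx g x t := by
  apply Filter.EventuallyEq.deriv_eq
  have hc : ContinuousAt (fun y : ℝ => (y, t)) x :=
    (continuous_id.prodMk continuous_const).continuousAt
  have hmem : {y : ℝ | (y, t) ∈ U} ∈ nhds x := hc.preimage_mem_nhds (hU.mem_nhds hxt)
  filter_upwards [hmem] with y hy using h y t hy

private lemma pdt_congr_on {U : Set (ℝ × ℝ)} (hU : IsOpen U) {f g : ℝ → ℝ → ℝ}
    (h : ∀ x t, (x, t) ∈ U → f x t = g x t) {x t : ℝ} (hxt : (x, t) ∈ U) :
    pdt f x t = pdt g x t := by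
  apply Filter.EventuallyEq.deriv_eq
  have hc : ContinuousAt (fun s : ℝ => (x, s)) t :=
    (continuous_const.prodMk continuous_id).continuousAt
  have hmem : {s : ℝ | (x, s) ∈ U} ∈ nhds t := hc.preimage_mem_nhds (hU.mem_nhds hxt)
  filter_upwards [hmem] with s hs using h x s hs

private lemma hasDerivAt_pdx {g : ℝ → ℝ → ℝ} (hg : ContDiff ℝ (⊤ : ℕ∞) (uncurry g)) (x t : ℝ) :
    HasDerivAt (fun y => g y t) (pdx g x t) x := by
  rw [pdx_eq_fderiv hg]; exact slice_x hg x t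

/-- The componentwise multi-symplectic system for the Hunter–Saxton equation implies
the Hunter–Saxton equation `u_{xxt} + 2 u_x u_{xx} + u u_{xxx} = 0`. -/
theorem stmt_2 (U : Set (ℝ × ℝ)) (hU : IsOpen U)
    (u φ w v η : ℝ → ℝ → ℝ)
    (hu : ContDiff ℝ (⊤ : ℕ∞) (Function.uncurry u))
    (hφ : ContDiff ℝ (⊤ : ℕ∞) (Function.uncurry φ))
    (hw : ContDiff ℝ (⊤ : ℕ∞) (Function.uncurry w))
    (hv : ContDiff ℝ (⊤ : ℕ∞) (Function.uncurry v))
    (hη : ContDiff ℝ (⊤ : ℕ∞) (Function.uncurry η))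
    (h1 : ∀ x t, (x, t) ∈ U →
      -(1 / 2) * pdt η x t - pdx v x t = -(w x t) - (1 / 2) * (η x t) ^ 2)
    (h2 : ∀ x t, (x, t) ∈ U → pdx w x t = 0)
    (h3 : ∀ x t, (x, t) ∈ U → pdx φ x t = u x t)
    (h4 : ∀ x t, (x, t) ∈ U → pdx u x t = η x t)
    (h5 : ∀ x t, (x, t) ∈ U → (1 / 2) * pdt u x t = -(u x t) * η x t + v x t) :
    ∀ x t, (x, t) ∈ U →
      pdt (pdx (pdx u)) x t + 2 * pdx u x t * pdx (pdx u) x t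
        + u x t * pdx (pdx (pdx u)) x t = 0 := by
  intro x t hxt
  -- smoothness facts
  have hpdxu := contDiff_pdx hu
  have hpdtu := contDiff_pdt hu
  have hpdxpdtu := contDiff_pdx hpdtu
  have hpdxη := contDiff_pdx hη
  have hpdxv := contDiff_pdx hv
  -- E2 : on U, u_xx = η_x
  have E2 : ∀ x t, (x, t) ∈ U → pdx (pdx u) x t = pdx η x t :=
    fun x t h => pdx_congr_on hU h4 h
  -- names at the point
  set A := pdt (pdx (pdx u)) x t with hA
  set N := η x t
  set Nx := pdx η x t
  set Nxx := pdx (pdx η) x t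
  -- E4 : A = pdt (pdx η) x t
  have E4 : A = pdt (pdx η) x t := pdt_congr_on hU E2 hxt
  -- Clairaut for η : pdt (pdx η) = pdx (pdt η)
  have E5 : pdt (pdx η) x t = pdx (pdt η) x t := clairaut hη x t
  -- h1 rearranged : on U, pdt η = 2 w + η² - 2 pdx v
  have E6 : ∀ x t, (x, t) ∈ U →
      pdt η x t = 2 * w x t + η x t ^ 2 - 2 * pdx v x t := by
    intro a b hb; have := h1 a b hb; linarith
  -- expand pdx (pdt η) at the point
  have E8 : pdx (pdt η) x t
      = 2 * pdx w x t + 2 * N ^ 1 * Nx - 2 * pdx (pdx v) x t := by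
    have h := pdx_congr_on hU E6 hxt
    rw [h]
    have hd : HasDerivAt
        (fun y => 2 * w y t + η y t ^ 2 - 2 * pdx v y t)
        (2 * pdx w x t + 2 * η x t ^ 1 * pdx η x t - 2 * pdx (pdx v) x t) x :=
      (((hasDerivAt_pdx hw x t).const_mul 2).add
        ((hasDerivAt_pdx hη x t).pow 2)).sub ((hasDerivAt_pdx hpdxv x t).const_mul 2)
    exact hd.deriv
  -- h5 rearranged : on U, v = (1/2) u_t + u η
  have E9 : ∀ x t, (x, t) ∈ U → v x t = 1 / 2 * pdt u x t + u x t * η x t := by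
    intro a b hb; have := h5 a b hb; linarith
  -- v_x on U
  have E10 : ∀ a b, (a, b) ∈ U → pdx v a b
      = 1 / 2 * pdx (pdt u) a b + (pdx u a b * η a b + u a b * pdx η a b) := by
    intro a b hb
    have h := pdx_congr_on hU E9 hb
    rw [h]
    have hd : HasDerivAt (fun y => 1 / 2 * pdt u y b + u y b * η y b)
        (1 / 2 * pdx (pdt u) a b + (pdx u a b * η a b + u a b * pdx η a b)) a :=
      ((hasDerivAt_pdx hpdtu a b).const_mul (1 / 2)).add
        ((hasDerivAt_pdx hu a b).mul (hasDerivAt_pdx hη a b))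
    exact hd.deriv
  -- v_xx at the point
  have E11 : pdx (pdx v) x t
      = 1 / 2 * pdx (pdx (pdt u)) x t
        + ((pdx (pdx u) x t * N + pdx u x t * Nx)
          + (pdx u x t * Nx + u x t * Nxx)) := by
    have h := pdx_congr_on hU E10 hxt
    rw [h]
    have hd : HasDerivAt
        (fun y => 1 / 2 * pdx (pdt u) y t + (pdx u y t * η y t + u y t * pdx η y t))
        (1 / 2 * pdx (pdx (pdt u)) x t
          + ((pdx (pdx u) x t * η x t + pdx u x t * pdx η x t)
            + (pdx u x t * pdx η x t + u x t * pdx (pdx η) x t))) x :=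
      ((hasDerivAt_pdx hpdxpdtu x t).const_mul (1 / 2)).add
        (((hasDerivAt_pdx hpdxu x t).mul (hasDerivAt_pdx hη x t)).add
          ((hasDerivAt_pdx hu x t).mul (hasDerivAt_pdx hpdxη x t)))
    exact hd.deriv
  -- u_txx = A : pdx (pdx (pdt u)) x t = pdt (pdx (pdx u)) x t
  have E12 : pdx (pdx (pdt u)) x t = A := by
    have hc1 : ∀ a b : ℝ, pdx (pdt u) a b = pdt (pdx u) a b :=
      fun a b => (clairaut hu a b).symm
    have h := pdx_congr_on (U := Set.univ) isOpen_univ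
      (fun a b _ => hc1 a b) (Set.mem_univ ((x : ℝ), (t : ℝ)))
    rw [h, ← clairaut hpdxu x t]
  -- E3 : u_xxx = η_xx at the point
  have E3 : pdx (pdx (pdx u)) x t = Nxx := pdx_congr_on hU E2 hxt
  -- collect
  have hxu : pdx u x t = N := h4 x t hxt
  have hxxu : pdx (pdx u) x t = Nx := E2 x t hxt
  have hw0 : pdx w x t = 0 := h2 x t hxt
  rw [hxu, hxxu, E3]
  have key : A = 2 * pdx w x t + 2 * N ^ 1 * Nx - 2 * pdx (pdx v) x t := by
    rw [E4, E5, E8]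
  rw [E11, E12, hxu, hxxu, hw0] at key
  ring_nf at key ⊢
  linarith
end

section
/- Let L > 0, T > 0 and let u : [−L, L] × [0, T] → ℝ be smooth and satisfy the Hunter–Saxton equation u_{xxt} + 2 u_x u_{xx} + u u_{xxx} = 0, together with the boundary conditions u(−L, t) = 0, u_x(L, t) = 0 and u_{xx}(L, t) = 0 for all t ∈ [0, T]. Then the Hamiltonian H₁(t) = (1/2)∫_{−L}^{L} u_x(x,t)² dx is constant in t, i.e. H₁(t) = H₁(0) for all t ∈ [0, T]. -/
open Function Set MeasureTheory

lemma HS_hasDerivAt_fst {w : ℝ → ℝ → ℝ} (hw : Differentiable ℝ (uncurry w)) (x t : ℝ) :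
    HasDerivAt (fun y => w y t) (fderiv ℝ (uncurry w) (x, t) (1, 0)) x := by
  have h1 : HasDerivAt (fun y => ((y, t) : ℝ × ℝ)) (1, 0) x :=
    (hasDerivAt_id x).prodMk (hasDerivAt_const x t)
  have := (hw (x, t)).hasFDerivAt.comp_hasDerivAt x h1
  simpa [Function.uncurry, Function.comp_def] using this

lemma HS_hasDerivAt_snd {w : ℝ → ℝ → ℝ} (hw : Differentiable ℝ (uncurry w)) (x t : ℝ) :
    HasDerivAt (fun s => w x s) (fderiv ℝ (uncurry w) (x, t) (0, 1)) t := by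
  have h1 : HasDerivAt (fun s => ((x, s) : ℝ × ℝ)) (0, 1) t :=
    (hasDerivAt_const t x).prodMk (hasDerivAt_id t)
  have := (hw (x, t)).hasFDerivAt.comp_hasDerivAt t h1
  simpa [Function.uncurry, Function.comp_def] using this

lemma HS_pdx_eq {w : ℝ → ℝ → ℝ} (hw : Differentiable ℝ (uncurry w)) (x t : ℝ) :
    pdx w x t = fderiv ℝ (uncurry w) (x, t) (1, 0) := (HS_hasDerivAt_fst hw x t).deriv

lemma HS_pdt_eq {w : ℝ → ℝ → ℝ} (hw : Differentiable ℝ (uncurry w)) (x t : ℝ) :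
    pdt w x t = fderiv ℝ (uncurry w) (x, t) (0, 1) := (HS_hasDerivAt_snd hw x t).deriv

lemma HS_hasDerivAt_pdx {w : ℝ → ℝ → ℝ} (hw : Differentiable ℝ (uncurry w)) (x t : ℝ) :
    HasDerivAt (fun y => w y t) (pdx w x t) x := by
  rw [HS_pdx_eq hw]; exact HS_hasDerivAt_fst hw x t

lemma HS_hasDerivAt_pdt {w : ℝ → ℝ → ℝ} (hw : Differentiable ℝ (uncurry w)) (x t : ℝ) :
    HasDerivAt (fun s => w x s) (pdt w x t) t := by
  rw [HS_pdt_eq hw]; exact HS_hasDerivAt_snd hw x t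

lemma HS_contDiff_pdx {w : ℝ → ℝ → ℝ} (hw : ContDiff ℝ (⊤ : ℕ∞) (uncurry w)) :
    ContDiff ℝ (⊤ : ℕ∞) (uncurry (pdx w)) := by
  have h : uncurry (pdx w) = fun p : ℝ × ℝ => fderiv ℝ (uncurry w) p (1, 0) := by
    funext p
    exact HS_pdx_eq (hw.differentiable (by simp)) p.1 p.2
  rw [h]
  exact (hw.fderiv_right (m := (⊤ : ℕ∞)) (by simp)).clm_apply contDiff_const

lemma HS_contDiff_pdt {w : ℝ → ℝ → ℝ} (hw : ContDiff ℝ (⊤ : ℕ∞) (uncurry w)) :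
    ContDiff ℝ (⊤ : ℕ∞) (uncurry (pdt w)) := by
  have h : uncurry (pdt w) = fun p : ℝ × ℝ => fderiv ℝ (uncurry w) p (0, 1) := by
    funext p
    exact HS_pdt_eq (hw.differentiable (by simp)) p.1 p.2
  rw [h]
  exact (hw.fderiv_right (m := (⊤ : ℕ∞)) (by simp)).clm_apply contDiff_const

lemma HS_fderiv_apply_const {W : ℝ × ℝ → ℝ} (hW : ContDiff ℝ (⊤ : ℕ∞) W) (v w q : ℝ × ℝ) :
    fderiv ℝ (fun p => fderiv ℝ W p v) q w = fderiv ℝ (fderiv ℝ W) q w v := by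
  have hd : DifferentiableAt ℝ (fderiv ℝ W) q :=
    ((hW.fderiv_right (m := (⊤ : ℕ∞)) (by simp)).differentiable (by simp)).differentiableAt
  have h2 : HasFDerivAt (fun p => fderiv ℝ W p v)
      ((ContinuousLinearMap.apply ℝ ℝ v).comp (fderiv ℝ (fderiv ℝ W) q)) q :=
    (ContinuousLinearMap.apply ℝ ℝ v).hasFDerivAt.comp q hd.hasFDerivAt
  rw [h2.fderiv]; rfl

lemma HS_uncurry_pdx {w : ℝ → ℝ → ℝ} (hw : Differentiable ℝ (uncurry w)) :
    uncurry (pdx w) = fun p : ℝ × ℝ => fderiv ℝ (uncurry w) p (1, 0) := by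
  funext p; exact HS_pdx_eq hw p.1 p.2

lemma HS_uncurry_pdt {w : ℝ → ℝ → ℝ} (hw : Differentiable ℝ (uncurry w)) :
    uncurry (pdt w) = fun p : ℝ × ℝ => fderiv ℝ (uncurry w) p (0, 1) := by
  funext p; exact HS_pdt_eq hw p.1 p.2

lemma HS_schwarz {w : ℝ → ℝ → ℝ} (hw : ContDiff ℝ (⊤ : ℕ∞) (uncurry w)) (x t : ℝ) :
    pdx (pdt w) x t = pdt (pdx w) x t := by
  have hdiff := hw.differentiable (by simp)
  have h1 : pdx (pdt w) x t
      = fderiv ℝ (fderiv ℝ (uncurry w)) (x, t) (1, 0) (0, 1) := by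
    rw [HS_pdx_eq ((HS_contDiff_pdt hw).differentiable (by simp)) x t, HS_uncurry_pdt hdiff,
      HS_fderiv_apply_const hw]
  have h2 : pdt (pdx w) x t
      = fderiv ℝ (fderiv ℝ (uncurry w)) (x, t) (0, 1) (1, 0) := by
    rw [HS_pdt_eq ((HS_contDiff_pdx hw).differentiable (by simp)) x t, HS_uncurry_pdx hdiff,
      HS_fderiv_apply_const hw]
  rw [h1, h2]
  exact (hw.contDiffAt.isSymmSndFDerivAt (by norm_num; exact WithTop.coe_le_coe.mpr le_top)).eq _ _

lemma HS_cont_slice_x {w : ℝ → ℝ → ℝ} (hw : Continuous (uncurry w)) (t : ℝ) :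
    Continuous (fun x => w x t) :=
  hw.comp (continuous_id.prodMk continuous_const)

/-- Fubini for interval integrals of continuous functions. -/
lemma HS_interval_fubini {f : ℝ → ℝ → ℝ} (hf : Continuous (uncurry f))
    {a b c d : ℝ} (hab : a ≤ b) (hcd : c ≤ d) :
    ∫ x in a..b, ∫ s in c..d, f x s = ∫ s in c..d, ∫ x in a..b, f x s := by
  have hint : Integrable (uncurry f)
      ((volume.restrict (Ioc a b)).prod (volume.restrict (Ioc c d))) := by
    rw [Measure.prod_restrict]
    exact (hf.continuousOn.integrableOn_compact (isCompact_Icc.prod isCompact_Icc)).mono_set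
      (Set.prod_mono Ioc_subset_Icc_self Ioc_subset_Icc_self)
  have hswap := MeasureTheory.integral_integral_swap hint
  simp only [intervalIntegral.integral_of_le hab, intervalIntegral.integral_of_le hcd]
  exact hswap

/-- For a smooth solution of the Hunter–Saxton equation on `[−L,L] × [0,T]` with
boundary conditions `u(−L,t) = u_x(L,t) = u_{xx}(L,t) = 0`, the Hamiltonian
`H₁(t) = ½∫_{−L}^{L} u_x² dx` is constant in time. -/
theorem stmt_3 (L T : ℝ) (hL : 0 < L) (hT : 0 < T)
    (u : ℝ → ℝ → ℝ) (hu : ContDiff ℝ (⊤ : ℕ∞) (Function.uncurry u))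
    (hpde : ∀ x ∈ Set.Icc (-L) L, ∀ t ∈ Set.Icc (0 : ℝ) T,
      pdt (pdx (pdx u)) x t + 2 * pdx u x t * pdx (pdx u) x t
        + u x t * pdx (pdx (pdx u)) x t = 0)
    (hbc1 : ∀ t ∈ Set.Icc (0 : ℝ) T, u (-L) t = 0)
    (hbc2 : ∀ t ∈ Set.Icc (0 : ℝ) T, pdx u L t = 0)
    (hbc3 : ∀ t ∈ Set.Icc (0 : ℝ) T, pdx (pdx u) L t = 0) :
    ∀ t ∈ Set.Icc (0 : ℝ) T,
      (1 / 2) * ∫ x in (-L)..L, (pdx u x t) ^ 2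
        = (1 / 2) * ∫ x in (-L)..L, (pdx u x 0) ^ 2 := by
  have hLL : (-L : ℝ) ≤ L := by linarith
  -- smoothness of all derivatives
  have hu1 : ContDiff ℝ (⊤ : ℕ∞) (uncurry (pdx u)) := HS_contDiff_pdx hu
  have hu2 : ContDiff ℝ (⊤ : ℕ∞) (uncurry (pdx (pdx u))) := HS_contDiff_pdx hu1
  have hu3 : ContDiff ℝ (⊤ : ℕ∞) (uncurry (pdx (pdx (pdx u)))) := HS_contDiff_pdx hu2
  have hv1 : ContDiff ℝ (⊤ : ℕ∞) (uncurry (pdt (pdx u))) := HS_contDiff_pdt hu1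
  have hud := hu.differentiable (by simp)
  have hu1d := hu1.differentiable (by simp)
  have hu2d := hu2.differentiable (by simp)
  have hv1d := hv1.differentiable (by simp)
  -- Claim A : u_{xt} = -(u u_{xx} + u_x^2/2) on [-L,L] × (0,T)
  have claimA : ∀ s ∈ Ioo (0 : ℝ) T, ∀ x ∈ Icc (-L) L,
      pdt (pdx u) x s = -(u x s * pdx (pdx u) x s + (1/2) * (pdx u x s)^2) := by
    intro s hs x hx
    have hsIcc : s ∈ Icc (0 : ℝ) T := ⟨hs.1.le, hs.2.le⟩
    set g : ℝ → ℝ := fun y =>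
      pdt (pdx u) y s + u y s * pdx (pdx u) y s + (1/2) * (pdx u y s)^2 with hg_def
    have hg : ∀ y : ℝ, HasDerivAt g
        (pdx (pdt (pdx u)) y s
          + (pdx u y s * pdx (pdx u) y s + u y s * pdx (pdx (pdx u)) y s)
          + (1/2) * (2 * pdx u y s * pdx (pdx u) y s)) y := by
      intro y
      have h1 := HS_hasDerivAt_pdx hv1d y s
      have h2 := (HS_hasDerivAt_pdx hud y s).mul (HS_hasDerivAt_pdx hu2d y s)
      have h3 : HasDerivAt (fun y => (1/2 : ℝ) * (pdx u y s)^2)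
          ((1/2) * (2 * pdx u y s * pdx (pdx u) y s)) y := by
        have := ((HS_hasDerivAt_pdx hu1d y s).const_mul (pdx u y s)).const_mul (1/2 : ℝ)
        -- fallback: build via pow
        have hp : HasDerivAt (fun y => (pdx u y s)^2)
            (2 * pdx u y s * pdx (pdx u) y s) y := by
          have := (HS_hasDerivAt_pdx hu1d y s).fun_pow 2
          simpa [mul_comm, mul_assoc, pow_one] using this
        exact hp.const_mul (1/2)
      exact (h1.add h2).add h3
    have hg0 : ∀ y ∈ Icc (-L) L, HasDerivAt g 0 y := by
      intro y hy
      have heq : pdx (pdt (pdx u)) y s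
          + (pdx u y s * pdx (pdx u) y s + u y s * pdx (pdx (pdx u)) y s)
          + (1/2) * (2 * pdx u y s * pdx (pdx u) y s) = 0 := by
        rw [HS_schwarz hu1 y s]
        have := hpde y hy s hsIcc
        ring_nf
        ring_nf at this
        linarith
      rw [← heq]; exact hg y
    have hconst : ∀ y ∈ Icc (-L) L, g y = g (-L) := by
      intro y hy
      exact constant_of_has_deriv_right_zero
        (fun z hz => ((hg z).differentiableAt.continuousAt.continuousWithinAt))
        (fun z hz => (hg0 z ⟨hz.1, hz.2.le⟩).hasDerivWithinAt) y hy
    have hgL : g L = 0 := by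
      have hvanish : pdt (pdx u) L s = 0 := by
        have hev : (fun τ => pdx u L τ) =ᶠ[nhds s] fun _ => (0 : ℝ) := by
          have hmem : Ioo (0 : ℝ) T ∈ nhds s := isOpen_Ioo.mem_nhds hs
          filter_upwards [hmem] with τ hτ
          exact hbc2 τ ⟨hτ.1.le, hτ.2.le⟩
        show deriv (fun τ => pdx u L τ) s = 0
        rw [hev.deriv_eq, deriv_const]
      simp [hg_def, hvanish, hbc2 s hsIcc, hbc3 s hsIcc]
    have := hconst x hx
    rw [← hconst L (by constructor <;> linarith), hgL] at this
    have hgx : g x = 0 := this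
    simp only [hg_def] at hgx
    linarith
  -- Claim B : the inner spatial integral vanishes for s ∈ (0,T)
  have claimB : ∀ s ∈ Ioo (0 : ℝ) T,
      (∫ x in (-L)..L, 2 * pdx u x s * pdt (pdx u) x s) = 0 := by
    intro s hs
    have hsIcc : s ∈ Icc (0 : ℝ) T := ⟨hs.1.le, hs.2.le⟩
    set F : ℝ → ℝ := fun y => -(u y s * (pdx u y s)^2) with hF_def
    have hderiv : ∀ y ∈ uIcc (-L) L,
        HasDerivAt F (2 * pdx u y s * pdt (pdx u) y s) y := by
      intro y hy
      have hyIcc : y ∈ Icc (-L) L := by rwa [uIcc_of_le hLL] at hy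
      have hp : HasDerivAt (fun y => (pdx u y s)^2)
          (2 * pdx u y s * pdx (pdx u) y s) y := by
        have := (HS_hasDerivAt_pdx hu1d y s).fun_pow 2
        simpa [mul_comm, mul_assoc, pow_one] using this
      have h2 := ((HS_hasDerivAt_pdx hud y s).mul hp).neg
      have : 2 * pdx u y s * pdt (pdx u) y s
          = -(pdx u y s * (pdx u y s)^2 + u y s * (2 * pdx u y s * pdx (pdx u) y s)) := by
        rw [claimA s hs y hyIcc]; ring
      rw [this]
      exact h2
    have hcont : Continuous (fun x => 2 * pdx u x s * pdt (pdx u) x s) := by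
      exact ((continuous_const.mul (HS_cont_slice_x hu1.continuous s)).mul
        (HS_cont_slice_x hv1.continuous s))
    rw [intervalIntegral.integral_eq_sub_of_hasDerivAt hderiv
      (hcont.intervalIntegrable _ _)]
    simp [hF_def, hbc1 s hsIcc, hbc2 s hsIcc]
  -- main argument
  intro t ht
  have h01 : (0 : ℝ) ≤ t := ht.1
  -- FTC in time for each x
  have step1 : ∀ x : ℝ, (pdx u x t)^2 - (pdx u x 0)^2
      = ∫ s in (0 : ℝ)..t, 2 * pdx u x s * pdt (pdx u) x s := by
    intro x
    have hderiv : ∀ s ∈ uIcc (0 : ℝ) t,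
        HasDerivAt (fun s => (pdx u x s)^2) (2 * pdx u x s * pdt (pdx u) x s) s := by
      intro s _
      have := (HS_hasDerivAt_pdt hu1d x s).fun_pow 2
      simpa [mul_comm, mul_assoc, pow_one] using this
    have hcont : Continuous (fun s => 2 * pdx u x s * pdt (pdx u) x s) := by
      have c1 : Continuous (fun s => pdx u x s) :=
        hu1.continuous.comp (continuous_const.prodMk continuous_id)
      have c2 : Continuous (fun s => pdt (pdx u) x s) :=
        hv1.continuous.comp (continuous_const.prodMk continuous_id)
      exact (continuous_const.mul c1).mul c2
    rw [intervalIntegral.integral_eq_sub_of_hasDerivAt hderiv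
      (hcont.intervalIntegrable _ _)]
  have hcont2 : Continuous (uncurry fun x s => 2 * pdx u x s * pdt (pdx u) x s) := by
    exact (continuous_const.mul hu1.continuous).mul hv1.continuous
  have step2 : (∫ x in (-L)..L, (pdx u x t)^2) - (∫ x in (-L)..L, (pdx u x 0)^2)
      = ∫ x in (-L)..L, ∫ s in (0 : ℝ)..t, 2 * pdx u x s * pdt (pdx u) x s := by
    rw [← intervalIntegral.integral_sub
      (((HS_cont_slice_x hu1.continuous t).fun_pow 2).intervalIntegrable _ _)
      (((HS_cont_slice_x hu1.continuous 0).fun_pow 2).intervalIntegrable _ _)]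
    exact intervalIntegral.integral_congr (fun x _ => step1 x)
  have step3 : (∫ x in (-L)..L, ∫ s in (0 : ℝ)..t, 2 * pdx u x s * pdt (pdx u) x s)
      = ∫ s in (0 : ℝ)..t, ∫ x in (-L)..L, 2 * pdx u x s * pdt (pdx u) x s :=
    HS_interval_fubini hcont2 hLL h01
  have step4 : (∫ s in (0 : ℝ)..t, ∫ x in (-L)..L, 2 * pdx u x s * pdt (pdx u) x s) = 0 := by
    have hae : ∀ᵐ s : ℝ, s ∈ Set.uIoc (0 : ℝ) t →
        (∫ x in (-L)..L, 2 * pdx u x s * pdt (pdx u) x s) = 0 := by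
      have hne : ∀ᵐ s : ℝ, s ≠ T := by
        rw [MeasureTheory.ae_iff]
        simp only [ne_eq, not_not, Set.setOf_eq_eq_singleton]
        exact measure_singleton T
      filter_upwards [hne] with s hsne hsmem
      rw [uIoc_of_le h01] at hsmem
      have hsT : s < T := lt_of_le_of_ne (le_trans hsmem.2 ht.2) hsne
      exact claimB s ⟨hsmem.1, hsT⟩
    calc (∫ s in (0 : ℝ)..t, ∫ x in (-L)..L, 2 * pdx u x s * pdt (pdx u) x s)
        = ∫ s in (0 : ℝ)..t, (0 : ℝ) := intervalIntegral.integral_congr_ae hae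
      _ = 0 := intervalIntegral.integral_zero
  have : (∫ x in (-L)..L, (pdx u x t)^2) = ∫ x in (-L)..L, (pdx u x 0)^2 := by
    have := step2.trans (step3.trans step4)
    linarith
  rw [this]
end
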